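/- arXiv:2401.08620 — 8 statements merged into one kernel-verified Lean document; each statement's English description precedes it below -/
import Mathlib

section
/- Let f:[a,b]→ℝ be continuous and Φ-Hölder (i.e., |f(x)−f(y)| ≤ Φ(|x−y|) for all x,y ∈ [a,b]). Then for every n ∈ ℕ, n ≥ 1, max{f(a), f(b)} − (n/2)·Φ((b−a)/n) ≤ T_n(f)/(b−a) ≤ min{f(a), f(b)} + (n/2)·Φ((b−a)/n), where T_n(f) is the composite trapezoidal sum with n equal subintervals. -/
/-!
Write `y i = f (a + i (b - a) / n)` and `p = Φ ((b - a) / n)`, so that consecutive nodes satisfy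
`|y (i + 1) - y i| ≤ p`, hence `|y i - y 0| ≤ i p`. The trapezoidal sum is `∑_{i < n} (y i + y (i + 1))`,
whose `i`-th term is within `(2 i + 1) p` of `2 y 0`; since `∑_{i < n} (2 i + 1) = n²`, the sum is within
`n² p` of `2 n y 0`, i.e. `T_n(f) / (b - a)` is within `n p / 2` of `f a`. Reversing the nodes gives the
same for `f b`.
-/

open Finset

theorem sum_range_two_mul_add_one (n : ℕ) : ∑ i ∈ range n, (2 * i + 1 : ℝ) = n ^ 2 := by
  induction n with
  | zero => simp
  | succ n ih => rw [sum_range_succ, ih]; push_cast; ring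

theorem sum_range_add_succ_eq {M : Type*} [AddCommMonoid M] (y : ℕ → M) {n : ℕ} (hn : 1 ≤ n) :
    ∑ i ∈ range n, (y i + y (i + 1)) = y 0 + 2 • ∑ i ∈ Ico 1 n, y i + y n := by
  induction n, hn using Nat.le_induction with
  | base => simp
  | succ n hn ih =>
    rw [sum_range_succ, ih, sum_Ico_succ_top hn, two_nsmul, two_nsmul]
    abel

theorem sum_range_add_succ_reflect {M : Type*} [AddCommMonoid M] (y : ℕ → M) (n : ℕ) :
    ∑ i ∈ range n, (y (n - i) + y (n - (i + 1))) = ∑ i ∈ range n, (y i + y (i + 1)) := by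
  rw [← sum_range_reflect]
  refine sum_congr rfl fun i hi => ?_
  have hi : i < n := mem_range.mp hi
  rw [show n - (n - 1 - i) = i + 1 by omega, show n - (n - 1 - i + 1) = i by omega, add_comm]

section TrapezoidSum

variable {y : ℕ → ℝ} {n : ℕ} {p : ℝ}

theorem abs_sub_zero_le_of_abs_sub_succ_le (hy : ∀ i < n, |y (i + 1) - y i| ≤ p) {i : ℕ}
    (hi : i ≤ n) : |y i - y 0| ≤ i * p := by
  have := dist_le_range_sum_of_dist_le (f := y) i (d := fun _ => p) fun hk => by
    rw [Real.dist_eq, abs_sub_comm]; exact hy _ (by omega)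
  simpa [Real.dist_eq, abs_sub_comm] using this

theorem abs_sum_range_add_succ_sub_zero_le (hy : ∀ i < n, |y (i + 1) - y i| ≤ p) :
    |∑ i ∈ range n, (y i + y (i + 1)) - 2 * n * y 0| ≤ n ^ 2 * p := by
  have hterm : ∀ i ∈ range n, |y i + y (i + 1) - 2 * y 0| ≤ (2 * i + 1) * p := by
    intro i hi
    have hi : i < n := mem_range.mp hi
    calc |y i + y (i + 1) - 2 * y 0| = |(y i - y 0) + (y (i + 1) - y 0)| := by ring_nf
      _ ≤ |y i - y 0| + |y (i + 1) - y 0| := abs_add_le _ _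
      _ ≤ i * p + (i + 1 : ℕ) * p := add_le_add
          (abs_sub_zero_le_of_abs_sub_succ_le hy hi.le) (abs_sub_zero_le_of_abs_sub_succ_le hy hi)
      _ = (2 * i + 1) * p := by push_cast; ring
  calc |∑ i ∈ range n, (y i + y (i + 1)) - 2 * n * y 0|
      = |∑ i ∈ range n, (y i + y (i + 1) - 2 * y 0)| := by
        rw [sum_sub_distrib, sum_const, card_range, nsmul_eq_mul]; ring_nf
    _ ≤ ∑ i ∈ range n, (2 * i + 1 : ℝ) * p := (abs_sum_le_sum_abs _ _).trans (sum_le_sum hterm)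
    _ = n ^ 2 * p := by rw [← sum_mul, sum_range_two_mul_add_one]

theorem abs_sum_range_add_succ_sub_last_le (hy : ∀ i < n, |y (i + 1) - y i| ≤ p) :
    |∑ i ∈ range n, (y i + y (i + 1)) - 2 * n * y n| ≤ n ^ 2 * p := by
  have hrev : ∀ i < n, |y (n - (i + 1)) - y (n - i)| ≤ p := by
    intro i hi
    rw [abs_sub_comm, show n - i = n - (i + 1) + 1 by omega]
    exact hy _ (by omega)
  simpa [sum_range_add_succ_reflect] using
    abs_sum_range_add_succ_sub_zero_le (y := fun i => y (n - i)) hrev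

end TrapezoidSum

theorem add_nat_mul_div_mem_Icc {a b : ℝ} (hab : a ≤ b) {i n : ℕ} (hn : 0 < n) (hi : i ≤ n) :
    a + i * (b - a) / n ∈ Set.Icc a b := by
  have hnR : (0 : ℝ) < n := by exact_mod_cast hn
  have hi : (i : ℝ) ≤ n := by exact_mod_cast hi
  refine ⟨le_add_of_nonneg_right (by have := sub_nonneg.mpr hab; positivity), ?_⟩
  rw [← le_sub_iff_add_le', div_le_iff₀ hnR]
  nlinarith

theorem abs_div_two_mul_sub_le {S u p : ℝ} {n : ℕ} (hn : 0 < n)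
    (h : |S - 2 * n * u| ≤ n ^ 2 * p) : |S / (2 * n) - u| ≤ n / 2 * p := by
  have h2n : (0 : ℝ) < 2 * n := by positivity
  rw [div_sub' h2n.ne', abs_div, abs_of_pos h2n, div_le_iff₀ h2n]
  exact h.trans_eq (by ring)

theorem max_sub_le_and_le_min_add_of_abs_sub_le {s u v c : ℝ} (hu : |s - u| ≤ c)
    (hv : |s - v| ≤ c) : max u v - c ≤ s ∧ s ≤ min u v + c := by
  rw [abs_le] at hu hv
  exact ⟨sub_le_iff_le_add.mpr (max_le (by linarith) (by linarith)),
    sub_le_iff_le_add.mp (le_min (by linarith) (by linarith))⟩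

theorem trapezoid_phi_holder_general
    (a b : ℝ) (hab : a < b) (f Φ : ℝ → ℝ)
    (hhold : ∀ x ∈ Set.Icc a b, ∀ y ∈ Set.Icc a b, |f x - f y| ≤ Φ |x - y|)
    (n : ℕ) (hn : 1 ≤ n) :
    max (f a) (f b) - (n / 2 : ℝ) * Φ ((b - a) / n) ≤ ((b - a) / (2 * n) * (f a + 2 * ∑ i ∈ Finset.Ico 1 n, f (a + i * (b - a) / n) + f b)) / (b - a) ∧
    ((b - a) / (2 * n) * (f a + 2 * ∑ i ∈ Finset.Ico 1 n, f (a + i * (b - a) / n) + f b)) / (b - a) ≤ min (f a) (f b) + (n / 2 : ℝ) * Φ ((b - a) / n) := by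
  have hba : 0 < b - a := sub_pos.mpr hab
  have hnR : (0 : ℝ) < n := by exact_mod_cast hn
  set y : ℕ → ℝ := fun i => f (a + i * (b - a) / n)
  have hy0 : y 0 = f a := by simp [y]
  have hyn : y n = f b := by simp only [y]; congr 1; field_simp; ring
  have hstep : ∀ i < n, |y (i + 1) - y i| ≤ Φ ((b - a) / n) := by
    intro i hi
    convert hhold _ (add_nat_mul_div_mem_Icc hab.le hn (Nat.succ_le_of_lt hi)) _
      (add_nat_mul_div_mem_Icc hab.le hn hi.le) using 3
    rw [show a + ((i + 1 : ℕ) : ℝ) * (b - a) / n - (a + i * (b - a) / n) = (b - a) / n by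
      push_cast; ring, abs_of_pos (div_pos hba hnR)]
  have hsum := sum_range_add_succ_eq y hn
  rw [hy0, hyn, two_nsmul, ← two_mul] at hsum
  rw [← hsum, mul_div_right_comm, div_div_cancel_left' hba.ne', ← div_eq_inv_mul]
  exact max_sub_le_and_le_min_add_of_abs_sub_le
    (hy0 ▸ abs_div_two_mul_sub_le hn (abs_sum_range_add_succ_sub_zero_le hstep))
    (hyn ▸ abs_div_two_mul_sub_le hn (abs_sum_range_add_succ_sub_last_le hstep))

theorem trapezoid_phi_holder
    (a b : ℝ) (hab : a < b) (f Φ : ℝ → ℝ)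
    (hΦ : ∀ t ∈ Set.Icc (0 : ℝ) (b - a), 0 ≤ Φ t)
    (hf : ContinuousOn f (Set.Icc a b))
    (hhold : ∀ x ∈ Set.Icc a b, ∀ y ∈ Set.Icc a b, |f x - f y| ≤ Φ |x - y|)
    (n : ℕ) (hn : 1 ≤ n) :
    max (f a) (f b) - (n / 2 : ℝ) * Φ ((b - a) / n) ≤ ((b - a) / (2 * n) * (f a + 2 * ∑ i ∈ Finset.Ico 1 n, f (a + i * (b - a) / n) + f b)) / (b - a) ∧
    ((b - a) / (2 * n) * (f a + 2 * ∑ i ∈ Finset.Ico 1 n, f (a + i * (b - a) / n) + f b)) / (b - a) ≤ min (f a) (f b) + (n / 2 : ℝ) * Φ ((b - a) / n) :=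
  trapezoid_phi_holder_general a b hab f Φ hhold n hn
end

section
/- Let f:[a,b]→ℝ be continuous and Φ-monotone, where Φ: [0,b−a] → [0,∞) is superadditive. Then for every n ∈ ℕ, n ≥ 1, f(a) − Φ(b−a)/2 ≤ T_n(f)/(b−a) ≤ f(b) + Φ(b−a)/2, where T_n(f) is the composite trapezoidal sum with n equal subintervals. -/
/-!
Pair the node `xᵢ` with its mirror image `x_{n-i}`. Since `(xᵢ - a) + (x_{n-i} - a) = b - a`,
Φ-monotonicity from `a` to both nodes and superadditivity of `Φ` give
`2 f(a) - Φ(b - a) ≤ f(xᵢ) + f(x_{n-i})`, and symmetrically, comparing both nodes with `b`,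
`f(xᵢ) + f(x_{n-i}) ≤ 2 f(b) + Φ(b - a)`. The endpoint pair `f(a) + f(b)` obeys the same bounds,
and `2n · T_n(f) / (b - a)` is the sum of these `n` pair sums.
-/

open Finset

def PhiMonotoneOn (f Φ : ℝ → ℝ) (a b : ℝ) : Prop :=
  ∀ x y, a ≤ x → x < y → y ≤ b → f x ≤ f y + Φ (y - x)

def SuperadditiveOn (Φ : ℝ → ℝ) (L : ℝ) : Prop :=
  ∀ x y, 0 ≤ x → 0 ≤ y → x + y ≤ L → Φ x + Φ y ≤ Φ (x + y)

namespace PhiMonotoneOn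

variable {f Φ : ℝ → ℝ} {a b x y : ℝ}

theorem left_sub_le_right (hf : PhiMonotoneOn f Φ a b) (hab : a < b) : f a - Φ (b - a) ≤ f b := by
  linarith [hf a b le_rfl hab le_rfl]

theorem two_mul_sub_le_add_of_add_eq (hf : PhiMonotoneOn f Φ a b)
    (hΦ : SuperadditiveOn Φ (b - a)) (hax : a < x) (hay : a < y) (hxy : x + y = a + b) :
    2 * f a - Φ (b - a) ≤ f x + f y := by
  have hx := hf a x le_rfl hax (by linarith)
  have hy := hf a y le_rfl hay (by linarith)
  have hsplit : x - a + (y - a) = b - a := by linarith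
  have hsuper := hΦ (x - a) (y - a) (by linarith) (by linarith) hsplit.le
  rw [hsplit] at hsuper
  linarith

theorem add_le_two_mul_add_of_add_eq (hf : PhiMonotoneOn f Φ a b)
    (hΦ : SuperadditiveOn Φ (b - a)) (hxb : x < b) (hyb : y < b) (hxy : x + y = a + b) :
    f x + f y ≤ 2 * f b + Φ (b - a) := by
  have hx := hf x b (by linarith) hxb le_rfl
  have hy := hf y b (by linarith) hyb le_rfl
  have hsplit : b - x + (b - y) = b - a := by linarith
  have hsuper := hΦ (b - x) (b - y) (by linarith) (by linarith) hsplit.le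
  rw [hsplit] at hsuper
  linarith

end PhiMonotoneOn

noncomputable def trapezoidNode (a b : ℝ) (n i : ℕ) : ℝ := a + i * (b - a) / n

section TrapezoidNode

variable {a b : ℝ} {n i : ℕ}

theorem sub_mem_Ico_one (hi : i ∈ Ico 1 n) : n - i ∈ Ico 1 n := by
  obtain ⟨hi1, hin⟩ := mem_Ico.1 hi
  exact mem_Ico.2 ⟨by omega, by omega⟩

theorem left_lt_trapezoidNode (hab : a < b) (hi : i ∈ Ico 1 n) : a < trapezoidNode a b n i := by
  obtain ⟨hi1, hin⟩ := mem_Ico.1 hi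
  have hi0 : (0 : ℝ) < i := Nat.cast_pos.2 (by omega)
  have hn0 : (0 : ℝ) < n := Nat.cast_pos.2 (by omega)
  have : 0 < i * (b - a) / n := div_pos (mul_pos hi0 (sub_pos.2 hab)) hn0
  unfold trapezoidNode
  linarith

theorem trapezoidNode_add_reflect (hi : i ∈ Ico 1 n) :
    trapezoidNode a b n i + trapezoidNode a b n (n - i) = a + b := by
  obtain ⟨hi1, hin⟩ := mem_Ico.1 hi
  have hn : (n : ℝ) ≠ 0 := Nat.cast_ne_zero.2 (by omega)
  unfold trapezoidNode
  rw [Nat.cast_sub hin.le]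
  field_simp
  ring

theorem trapezoidNode_lt_right (hab : a < b) (hi : i ∈ Ico 1 n) : trapezoidNode a b n i < b := by
  linarith [left_lt_trapezoidNode hab (sub_mem_Ico_one hi),
    trapezoidNode_add_reflect (a := a) (b := b) hi]

end TrapezoidNode

theorem two_mul_sum_Ico_eq_sum_add_reflect {R : Type*} [NonAssocSemiring R] (g : ℕ → R) (n : ℕ) :
    2 * ∑ i ∈ Ico 1 n, g i = ∑ i ∈ Ico 1 n, (g i + g (n - i)) := by
  rw [sum_add_distrib, two_mul]
  congr 1
  rcases n with _ | n
  · simp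
  · rw [sum_Ico_reflect g 1 (by omega)]
    simp

theorem cast_card_Ico_one {n : ℕ} (hn : 1 ≤ n) : ((Ico 1 n).card : ℝ) = n - 1 := by
  rw [Nat.card_Ico, Nat.cast_sub hn, Nat.cast_one]

section Trapezoid

variable {f Φ : ℝ → ℝ} {a b : ℝ} {n : ℕ}

theorem PhiMonotoneOn.mul_two_mul_sub_le_trapezoid (hf : PhiMonotoneOn f Φ a b)
    (hΦ : SuperadditiveOn Φ (b - a)) (hab : a < b) (hn : 1 ≤ n) :
    n * (2 * f a - Φ (b - a)) ≤
      f a + 2 * ∑ i ∈ Ico 1 n, f (trapezoidNode a b n i) + f b := by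
  have hpairs := card_nsmul_le_sum (Ico 1 n) (fun i ↦ f (trapezoidNode a b n i)
      + f (trapezoidNode a b n (n - i))) (2 * f a - Φ (b - a)) fun i hi ↦
    hf.two_mul_sub_le_add_of_add_eq hΦ (left_lt_trapezoidNode hab hi)
      (left_lt_trapezoidNode hab (sub_mem_Ico_one hi)) (trapezoidNode_add_reflect hi)
  rw [nsmul_eq_mul, cast_card_Ico_one hn] at hpairs
  rw [two_mul_sum_Ico_eq_sum_add_reflect]
  linarith [hf.left_sub_le_right hab]

theorem PhiMonotoneOn.trapezoid_le_mul_two_mul_add (hf : PhiMonotoneOn f Φ a b)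
    (hΦ : SuperadditiveOn Φ (b - a)) (hab : a < b) (hn : 1 ≤ n) :
    f a + 2 * ∑ i ∈ Ico 1 n, f (trapezoidNode a b n i) + f b ≤
      n * (2 * f b + Φ (b - a)) := by
  have hpairs := sum_le_card_nsmul (Ico 1 n) (fun i ↦ f (trapezoidNode a b n i)
      + f (trapezoidNode a b n (n - i))) (2 * f b + Φ (b - a)) fun i hi ↦
    hf.add_le_two_mul_add_of_add_eq hΦ (trapezoidNode_lt_right hab hi)
      (trapezoidNode_lt_right hab (sub_mem_Ico_one hi)) (trapezoidNode_add_reflect hi)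
  rw [nsmul_eq_mul, cast_card_Ico_one hn] at hpairs
  rw [two_mul_sum_Ico_eq_sum_add_reflect]
  linarith [hf.left_sub_le_right hab]

end Trapezoid

theorem trapezoid_phi_monotone_superadditive_general
    (a b : ℝ) (hab : a < b) (f Φ : ℝ → ℝ)
    (hsuper : ∀ x y, 0 ≤ x → 0 ≤ y → x + y ≤ b - a → Φ x + Φ y ≤ Φ (x + y))
    (hmono : ∀ x y, a ≤ x → x < y → y ≤ b → f x ≤ f y + Φ (y - x))
    (n : ℕ) (hn : 1 ≤ n) :
    f a - Φ (b - a) / 2 ≤ ((b - a) / (2 * n) * (f a + 2 * ∑ i ∈ Finset.Ico 1 n, f (a + i * (b - a) / n) + f b)) / (b - a) ∧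
    ((b - a) / (2 * n) * (f a + 2 * ∑ i ∈ Finset.Ico 1 n, f (a + i * (b - a) / n) + f b)) / (b - a) ≤ f b + Φ (b - a) / 2 := by
  have hlower := PhiMonotoneOn.mul_two_mul_sub_le_trapezoid hmono hsuper hab hn
  have hupper := PhiMonotoneOn.trapezoid_le_mul_two_mul_add hmono hsuper hab hn
  unfold trapezoidNode at hlower hupper
  set T := f a + 2 * ∑ i ∈ Ico 1 n, f (a + i * (b - a) / n) + f b
  have hn0 : (0 : ℝ) < 2 * n := by positivity
  have haverage : (b - a) / (2 * n) * T / (b - a) = T / (2 * n) := by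
    field_simp [(sub_pos.2 hab).ne']
  rw [haverage, le_div_iff₀ hn0, div_le_iff₀ hn0]
  constructor <;> linarith

theorem trapezoid_phi_monotone_superadditive
    (a b : ℝ) (hab : a < b) (f Φ : ℝ → ℝ)
    (hΦ : ∀ t ∈ Set.Icc (0 : ℝ) (b - a), 0 ≤ Φ t)
    (hsuper : ∀ x y, 0 ≤ x → 0 ≤ y → x + y ≤ b - a → Φ x + Φ y ≤ Φ (x + y))
    (hf : ContinuousOn f (Set.Icc a b))
    (hmono : ∀ x y, a ≤ x → x < y → y ≤ b → f x ≤ f y + Φ (y - x))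
    (n : ℕ) (hn : 1 ≤ n) :
    f a - Φ (b - a) / 2 ≤ ((b - a) / (2 * n) * (f a + 2 * ∑ i ∈ Finset.Ico 1 n, f (a + i * (b - a) / n) + f b)) / (b - a) ∧
    ((b - a) / (2 * n) * (f a + 2 * ∑ i ∈ Finset.Ico 1 n, f (a + i * (b - a) / n) + f b)) / (b - a) ≤ f b + Φ (b - a) / 2 :=
  trapezoid_phi_monotone_superadditive_general a b hab f Φ hsuper hmono n hn
end

section
/- Let f:[a,b]→ℝ be continuous and Φ-monotone. Then for every even n ∈ ℕ, n ≥ 2, the composite Simpson sum S_n(f) := ((b−a)/(3n))·[f(x_0) + 2∑_{i=1}^{n/2−1} f(x_{2i}) + 4∑_{i=1}^{n/2} f(x_{2i−1}) + f(x_n)] satisfies f(a) − (n/2)·Φ((b−a)/n) ≤ S_n(f)/(b−a) ≤ f(b) + (n/2)·Φ((b−a)/n). -/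
/-!
With `h = (b - a) / n` and nodes `xₖ = a + k h`, Φ-monotonicity between consecutive nodes says
that `k ↦ f(xₖ) + k Φ(h)` is nondecreasing, so `f(a) - k Φ(h) ≤ f(xₖ) ≤ f(b) + (n - k) Φ(h)`.
Simpson's rule has nonnegative weights and integrates affine functions exactly; its weights sum
to `3n` and are symmetric about `n / 2`, so applying it to these affine bounds gives exactly
`3n (f(a) - (n/2) Φ(h))` and `3n (f(b) + (n/2) Φ(h))`.
-/

open Finset

/-- The bracket of the composite Simpson sum with `2 * m` panels, on node indices. -/
def simpsonSum (m : ℕ) (g : ℕ → ℝ) : ℝ :=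
  g 0 + 2 * ∑ i ∈ Ico 1 m, g (2 * i) + 4 * ∑ i ∈ Icc 1 m, g (2 * i - 1) + g (2 * m)

section SimpsonSum

variable {m : ℕ} {g : ℕ → ℝ}

theorem simpsonSum_one (g : ℕ → ℝ) : simpsonSum 1 g = g 0 + 4 * g 1 + g 2 := by
  simp [simpsonSum]

theorem simpsonSum_succ (g : ℕ → ℝ) (hm : 1 ≤ m) :
    simpsonSum (m + 1) g = simpsonSum m g + g (2 * m) + 4 * g (2 * m + 1) + g (2 * m + 2) := by
  simp only [simpsonSum, sum_Ico_succ_top hm, sum_Icc_succ_top (Nat.le_add_left 1 m)]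
  rw [show 2 * (m + 1) - 1 = 2 * m + 1 by omega, show 2 * (m + 1) = 2 * m + 2 by ring]
  ring

theorem simpsonSum_affine (c d : ℝ) (hm : 1 ≤ m) :
    simpsonSum m (fun k => c + d * k) = 6 * m * (c + m * d) := by
  induction m, hm using Nat.le_induction with
  | base => rw [simpsonSum_one]; push_cast; ring
  | succ m hm ih => rw [simpsonSum_succ _ hm, ih]; push_cast; ring

theorem simpsonSum_mono {g' : ℕ → ℝ} (h : ∀ k ≤ 2 * m, g k ≤ g' k) :
    simpsonSum m g ≤ simpsonSum m g' := by
  unfold simpsonSum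
  gcongr with i hi i hi
  · exact h _ (Nat.zero_le _)
  · exact h _ (by rw [mem_Ico] at hi; omega)
  · exact h _ (by rw [mem_Icc] at hi; omega)
  · exact h _ le_rfl

variable {c : ℝ}

theorem monotoneOn_add_mul_of_le_succ_add {n : ℕ} (h : ∀ k < n, g k ≤ g (k + 1) + c) :
    MonotoneOn (fun k : ℕ => g k + k * c) (Set.Iic n) :=
  monotoneOn_of_le_succ Set.ordConnected_Iic fun k _ _ hk => by
    simp only [Order.succ_eq_add_one, Set.mem_Iic] at hk ⊢
    push_cast
    linarith [h k (by omega)]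

theorem le_simpsonSum_of_le_succ_add (hm : 1 ≤ m) (h : ∀ k < 2 * m, g k ≤ g (k + 1) + c) :
    6 * m * (g 0 - m * c) ≤ simpsonSum m g := by
  have hmono := monotoneOn_add_mul_of_le_succ_add h
  calc 6 * m * (g 0 - m * c) = simpsonSum m (fun k => g 0 + -c * k) := by
        rw [simpsonSum_affine _ _ hm]; ring
    _ ≤ simpsonSum m g := simpsonSum_mono fun k hk => by
        have := hmono (Set.mem_Iic.2 (Nat.zero_le _)) (Set.mem_Iic.2 hk) (Nat.zero_le k)
        simp only [Nat.cast_zero, zero_mul, add_zero] at this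
        linarith

theorem simpsonSum_le_of_le_succ_add (hm : 1 ≤ m) (h : ∀ k < 2 * m, g k ≤ g (k + 1) + c) :
    simpsonSum m g ≤ 6 * m * (g (2 * m) + m * c) := by
  have hmono := monotoneOn_add_mul_of_le_succ_add h
  calc simpsonSum m g ≤ simpsonSum m (fun k => (g (2 * m) + 2 * m * c) + -c * k) :=
        simpsonSum_mono fun k hk => by
          have := hmono (Set.mem_Iic.2 hk) (Set.mem_Iic.2 le_rfl) hk
          push_cast at this
          linarith
    _ = 6 * m * (g (2 * m) + m * c) := by rw [simpsonSum_affine _ _ hm]; ring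

end SimpsonSum

theorem le_apply_succ_node_add {a b : ℝ} (hab : a < b) {f Φ : ℝ → ℝ}
    (hmono : ∀ x y, a ≤ x → x < y → y ≤ b → f x ≤ f y + Φ (y - x)) {n k : ℕ} (hk : k < n) :
    f (a + k * (b - a) / n) ≤ f (a + (k + 1 : ℕ) * (b - a) / n) + Φ ((b - a) / n) := by
  have hn : (0 : ℝ) < n := by exact_mod_cast hk.pos
  have hk' : (k + 1 : ℝ) ≤ n := by exact_mod_cast hk
  have hba : 0 < b - a := sub_pos.2 hab
  convert hmono _ _ _ _ _ using 3
  · push_cast; ring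
  · have := div_nonneg (mul_nonneg k.cast_nonneg hba.le) hn.le
    linarith
  · push_cast; gcongr; linarith
  · push_cast
    rw [add_comm, ← le_sub_iff_add_le, div_le_iff₀ hn]
    nlinarith

theorem simpson_phi_monotone_general
    (a b : ℝ) (hab : a < b) (f Φ : ℝ → ℝ)
    (hmono : ∀ x y, a ≤ x → x < y → y ≤ b → f x ≤ f y + Φ (y - x))
    (n : ℕ) (hn : 2 ≤ n) (hne : Even n) :
    f a - (n / 2 : ℝ) * Φ ((b - a) / n) ≤ ((b - a) / (3 * n) * (f a + 2 * ∑ i ∈ Finset.Ico 1 (n / 2), f (a + (2 * i : ℕ) * (b - a) / n) + 4 * ∑ i ∈ Finset.Icc 1 (n / 2), f (a + (2 * i - 1 : ℕ) * (b - a) / n) + f b)) / (b - a) ∧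
    ((b - a) / (3 * n) * (f a + 2 * ∑ i ∈ Finset.Ico 1 (n / 2), f (a + (2 * i : ℕ) * (b - a) / n) + 4 * ∑ i ∈ Finset.Icc 1 (n / 2), f (a + (2 * i - 1 : ℕ) * (b - a) / n) + f b)) / (b - a) ≤ f b + (n / 2 : ℝ) * Φ ((b - a) / n) := by
  obtain ⟨m, rfl⟩ := hne
  have hm : 1 ≤ m := by omega
  set g : ℕ → ℝ := fun k => f (a + k * (b - a) / (m + m : ℕ))
  have hstep : ∀ k < 2 * m, g k ≤ g (k + 1) + Φ ((b - a) / (m + m : ℕ)) := fun k hk =>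
    le_apply_succ_node_add hab hmono (by omega)
  have hg0 : g 0 = f a := by simp [g]
  have hgn : g (2 * m) = f b := by
    simp only [g]; congr 1; push_cast; field_simp; ring
  have hsum : f a + 2 * ∑ i ∈ Ico 1 ((m + m) / 2), g (2 * i)
      + 4 * ∑ i ∈ Icc 1 ((m + m) / 2), g (2 * i - 1) + f b = simpsonSum m g := by
    rw [show (m + m) / 2 = m by omega, simpsonSum, hg0, hgn]
  have hlow := hg0 ▸ le_simpsonSum_of_le_succ_add hm hstep
  have hhigh := hgn ▸ simpsonSum_le_of_le_succ_add hm hstep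
  have hmean : (b - a) / (3 * (m + m : ℕ)) * simpsonSum m g / (b - a)
      = simpsonSum m g / (6 * m) := by
    have : b - a ≠ 0 := (sub_pos.2 hab).ne'
    field_simp; push_cast; ring
  have h6m : (0 : ℝ) < 6 * m := by positivity
  have hhalf : ((m + m : ℕ) : ℝ) / 2 = m := by push_cast; ring
  rw [hsum, hmean, hhalf, le_div_iff₀ h6m, div_le_iff₀ h6m]
  constructor <;> linarith

theorem simpson_phi_monotone
    (a b : ℝ) (hab : a < b) (f Φ : ℝ → ℝ)
    (hΦ : ∀ t ∈ Set.Icc (0 : ℝ) (b - a), 0 ≤ Φ t)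
    (hf : ContinuousOn f (Set.Icc a b))
    (hmono : ∀ x y, a ≤ x → x < y → y ≤ b → f x ≤ f y + Φ (y - x))
    (n : ℕ) (hn : 2 ≤ n) (hne : Even n) :
    f a - (n / 2 : ℝ) * Φ ((b - a) / n) ≤ ((b - a) / (3 * n) * (f a + 2 * ∑ i ∈ Finset.Ico 1 (n / 2), f (a + (2 * i : ℕ) * (b - a) / n) + 4 * ∑ i ∈ Finset.Icc 1 (n / 2), f (a + (2 * i - 1 : ℕ) * (b - a) / n) + f b)) / (b - a) ∧
    ((b - a) / (3 * n) * (f a + 2 * ∑ i ∈ Finset.Ico 1 (n / 2), f (a + (2 * i : ℕ) * (b - a) / n) + 4 * ∑ i ∈ Finset.Icc 1 (n / 2), f (a + (2 * i - 1 : ℕ) * (b - a) / n) + f b)) / (b - a) ≤ f b + (n / 2 : ℝ) * Φ ((b - a) / n) :=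
  simpson_phi_monotone_general a b hab f Φ hmono n hn hne
end

section
/- Let f:[a,b]→ℝ be continuous and Φ-monotone. Then for every n ∈ ℕ that is a positive multiple of 3, the composite Simpson 3/8 sum S38_n(f) := (3(b−a)/(8n))·∑_{i=1}^{n/3} [f(x_{3i−3}) + 3f(x_{3i−2}) + 3f(x_{3i−1}) + f(x_{3i})] satisfies f(a) − (n/2)·Φ((b−a)/n) ≤ S38_n(f)/(b−a) ≤ f(b) + (n/2)·Φ((b−a)/n). -/
/-!
On the grid `x_j = a + j h`, Φ-monotonicity gives `f x_j ≤ f x_{j+1} + Φ h`, i.e. `v_j = f x_j + j Φ h`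
is nondecreasing for `0 ≤ j ≤ n`, so `f a ≤ v_j ≤ f b + n Φ h`. The composite 3/8 weights
`1, 3, 3, 1` on `m = n / 3` blocks have total mass `8 m` and first moment `∑ w_j j = 12 m²`, hence
the Simpson sum of `f` is that of `v` minus `12 m² Φ h`; dividing by `8 m` gives the claim.
-/

open Finset

def simpson38Sum (u : ℕ → ℝ) (m : ℕ) : ℝ :=
  ∑ i ∈ Icc 1 m, (u (3 * i - 3) + 3 * u (3 * i - 2) + 3 * u (3 * i - 1) + u (3 * i))

namespace simpson38Sum

theorem add (u w : ℕ → ℝ) (m : ℕ) :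
    simpson38Sum (fun j ↦ u j + w j) m = simpson38Sum u m + simpson38Sum w m := by
  rw [simpson38Sum, simpson38Sum, simpson38Sum, ← sum_add_distrib]
  exact sum_congr rfl fun _ _ ↦ by ring

theorem mul_const (u : ℕ → ℝ) (c : ℝ) (m : ℕ) :
    simpson38Sum (fun j ↦ u j * c) m = simpson38Sum u m * c := by
  rw [simpson38Sum, simpson38Sum, sum_mul]
  exact sum_congr rfl fun _ _ ↦ by ring

theorem const (c : ℝ) (m : ℕ) : simpson38Sum (fun _ ↦ c) m = 8 * m * c := by
  simp only [simpson38Sum, sum_const, Nat.card_Icc, nsmul_eq_mul]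
  push_cast
  ring

theorem natCast (m : ℕ) : simpson38Sum (fun j ↦ (j : ℝ)) m = 12 * m ^ 2 := by
  induction m with
  | zero => simp [simpson38Sum]
  | succ k ih =>
    rw [simpson38Sum, sum_Icc_succ_top (by omega), ← simpson38Sum, ih,
      show 3 * (k + 1) - 3 = 3 * k by omega, show 3 * (k + 1) - 2 = 3 * k + 1 by omega,
      show 3 * (k + 1) - 1 = 3 * k + 2 by omega]
    push_cast
    ring

theorem mono {u w : ℕ → ℝ} {m : ℕ} (h : ∀ j ≤ 3 * m, u j ≤ w j) :
    simpson38Sum u m ≤ simpson38Sum w m := by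
  refine sum_le_sum fun i hi ↦ ?_
  have hi : i ≤ m := (mem_Icc.mp hi).2
  gcongr <;> exact h _ (by omega)

end simpson38Sum

section PhiMonotone

variable {f Φ : ℝ → ℝ} {a b h : ℝ}

theorem monotoneOn_grid_add_mul_phi
    (hmono : ∀ x y, a ≤ x → x < y → y ≤ b → f x ≤ f y + Φ (y - x)) (hh : 0 < h) {n : ℕ}
    (hn : a + n * h ≤ b) :
    MonotoneOn (fun j : ℕ ↦ f (a + j * h) + j * Φ h) (Set.Iic n) := by
  refine monotoneOn_of_le_add_one Set.ordConnected_Iic fun j _ _ hj ↦ ?_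
  have hj : (j + 1 : ℝ) ≤ n := by exact_mod_cast (hj : j + 1 ≤ n)
  have step := hmono (a + j * h) (a + (j + 1) * h) (by nlinarith [j.cast_nonneg (α := ℝ)])
    (by linarith) (by nlinarith)
  rw [show a + (j + 1) * h - (a + j * h) = h by ring] at step
  push_cast
  linarith

theorem simpson38Sum_grid_bounds
    (hmono : ∀ x y, a ≤ x → x < y → y ≤ b → f x ≤ f y + Φ (y - x)) (hh : 0 < h) {m : ℕ}
    (hend : a + 3 * m * h ≤ b) :
    8 * m * f a - 12 * m ^ 2 * Φ h ≤ simpson38Sum (fun j ↦ f (a + j * h)) m ∧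
      simpson38Sum (fun j ↦ f (a + j * h)) m ≤ 8 * m * f (a + 3 * m * h) + 12 * m ^ 2 * Φ h := by
  have hv := monotoneOn_grid_add_mul_phi hmono hh (n := 3 * m) (by push_cast; exact hend)
  have lower : simpson38Sum (fun _ ↦ f a) m ≤ simpson38Sum (fun j ↦ f (a + j * h) + j * Φ h) m :=
    simpson38Sum.mono fun j hj ↦ by simpa using hv (Nat.zero_le _) hj (Nat.zero_le j)
  have upper : simpson38Sum (fun j ↦ f (a + j * h) + j * Φ h) m ≤
      simpson38Sum (fun _ ↦ f (a + 3 * m * h) + 3 * m * Φ h) m :=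
    simpson38Sum.mono fun j hj ↦ by simpa using hv hj (Set.mem_Iic.mpr le_rfl) hj
  rw [simpson38Sum.add, simpson38Sum.mul_const, simpson38Sum.natCast, simpson38Sum.const]
    at lower upper
  constructor <;> linarith

end PhiMonotone

theorem simpson38_phi_monotone_general
    (a b : ℝ) (hab : a < b) (f Φ : ℝ → ℝ)
    (hmono : ∀ x y, a ≤ x → x < y → y ≤ b → f x ≤ f y + Φ (y - x))
    (n : ℕ) (hn : 1 ≤ n) (hn3 : 3 ∣ n) :
    f a - (n / 2 : ℝ) * Φ ((b - a) / n) ≤ (3 * (b - a) / (8 * n) * ∑ i ∈ Finset.Icc 1 (n / 3), (f (a + (3 * i - 3 : ℕ) * (b - a) / n) + 3 * f (a + (3 * i - 2 : ℕ) * (b - a) / n) + 3 * f (a + (3 * i - 1 : ℕ) * (b - a) / n) + f (a + (3 * i : ℕ) * (b - a) / n))) / (b - a) ∧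
    (3 * (b - a) / (8 * n) * ∑ i ∈ Finset.Icc 1 (n / 3), (f (a + (3 * i - 3 : ℕ) * (b - a) / n) + 3 * f (a + (3 * i - 2 : ℕ) * (b - a) / n) + 3 * f (a + (3 * i - 1 : ℕ) * (b - a) / n) + f (a + (3 * i : ℕ) * (b - a) / n))) / (b - a) ≤ f b + (n / 2 : ℝ) * Φ ((b - a) / n) := by
  obtain ⟨m, rfl⟩ := hn3
  set h := (b - a) / (3 * m : ℕ)
  have hnode (j : ℕ) : a + j * (b - a) / (3 * m : ℕ) = a + j * h := by rw [mul_div_assoc]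
  simp only [hnode, Nat.mul_div_cancel_left m three_pos]
  change _ ≤ 3 * (b - a) / (8 * (3 * m : ℕ)) * simpson38Sum (fun j ↦ f (a + j * h)) m / (b - a) ∧
    3 * (b - a) / (8 * (3 * m : ℕ)) * simpson38Sum (fun j ↦ f (a + j * h)) m / (b - a) ≤ _
  have hm : (0 : ℝ) < m := by exact_mod_cast (by omega : 0 < m)
  have hba : 0 < b - a := by linarith
  have hb : a + 3 * m * h = b := by
    simp only [h]
    push_cast
    field_simp
    ring
  obtain ⟨lower, upper⟩ :=
    simpson38Sum_grid_bounds hmono (div_pos hba (by positivity)) (m := m) hb.le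
  rw [hb] at upper
  set S := simpson38Sum (fun j ↦ f (a + j * h)) m
  have hnorm : 3 * (b - a) / (8 * (3 * m : ℕ)) * S / (b - a) = S / (8 * m) := by
    push_cast
    field_simp
  rw [hnorm, le_div_iff₀ (by positivity), div_le_iff₀ (by positivity)]
  push_cast
  constructor <;> linarith

theorem simpson38_phi_monotone
    (a b : ℝ) (hab : a < b) (f Φ : ℝ → ℝ)
    (hΦ : ∀ t ∈ Set.Icc (0 : ℝ) (b - a), 0 ≤ Φ t)
    (hf : ContinuousOn f (Set.Icc a b))
    (hmono : ∀ x y, a ≤ x → x < y → y ≤ b → f x ≤ f y + Φ (y - x))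
    (n : ℕ) (hn : 1 ≤ n) (hn3 : 3 ∣ n) :
    f a - (n / 2 : ℝ) * Φ ((b - a) / n) ≤ (3 * (b - a) / (8 * n) * ∑ i ∈ Finset.Icc 1 (n / 3), (f (a + (3 * i - 3 : ℕ) * (b - a) / n) + 3 * f (a + (3 * i - 2 : ℕ) * (b - a) / n) + 3 * f (a + (3 * i - 1 : ℕ) * (b - a) / n) + f (a + (3 * i : ℕ) * (b - a) / n))) / (b - a) ∧
    (3 * (b - a) / (8 * n) * ∑ i ∈ Finset.Icc 1 (n / 3), (f (a + (3 * i - 3 : ℕ) * (b - a) / n) + 3 * f (a + (3 * i - 2 : ℕ) * (b - a) / n) + 3 * f (a + (3 * i - 1 : ℕ) * (b - a) / n) + f (a + (3 * i : ℕ) * (b - a) / n))) / (b - a) ≤ f b + (n / 2 : ℝ) * Φ ((b - a) / n) :=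
  simpson38_phi_monotone_general a b hab f Φ hmono n hn hn3
end

section
/- Let f:[a,b]→ℝ be continuous and Φ-Hölder. Then for every n ∈ ℕ that is a positive multiple of 3, max{f(a), f(b)} − (n/2)·Φ((b−a)/n) ≤ S38_n(f)/(b−a) ≤ min{f(a), f(b)} + (n/2)·Φ((b−a)/n), where S38_n(f) is the composite Simpson 3/8 sum. -/
/-!
Put `x_j = a + j (b - a) / n` and `c = Φ ((b - a) / n)`. Chaining the Hölder bound along the grid
gives `|f x_j - f a| ≤ j c` and `|f x_j - f b| ≤ (n - j) c`. The normalized Simpson 3/8 sum is a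
weighted mean of the `f x_j` with positive weights, so its distance to `f a` (resp. `f b`) is at
most the same mean of `j c` (resp. `(n - j) c`). The rule is exact on affine functions, and both
means equal `(n / 2) c`.
-/

open Finset

theorem simpson38Sum_sub_const (u : ℕ → ℝ) (v : ℝ) (m : ℕ) :
    simpson38Sum (fun j => u j - v) m = simpson38Sum u m - 8 * m * v := by
  have hconst : 8 * (m : ℝ) * v = ∑ _i ∈ Icc 1 m, 8 * v := by simp; ring
  rw [simpson38Sum, simpson38Sum, hconst, ← sum_sub_distrib]
  exact sum_congr rfl fun i _ => by ring

theorem simpson38Sum_affine (p q : ℝ) (m : ℕ) :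
    simpson38Sum (fun j => p + q * j) m = 8 * m * p + 12 * m ^ 2 * q := by
  induction m with
  | zero => simp [simpson38Sum]
  | succ k ih =>
    simp only [simpson38Sum] at ih ⊢
    rw [sum_Icc_succ_top (by omega), ih,
      show 3 * (k + 1) - 3 = 3 * k by omega, show 3 * (k + 1) - 2 = 3 * k + 1 by omega,
      show 3 * (k + 1) - 1 = 3 * k + 2 by omega]
    push_cast
    ring

theorem abs_simpson38Sum_le {u d : ℕ → ℝ} {m : ℕ} (h : ∀ j ≤ 3 * m, |u j| ≤ d j) :
    |simpson38Sum u m| ≤ simpson38Sum d m := by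
  refine (abs_sum_le_sum_abs _ _).trans (sum_le_sum fun i hi => ?_)
  have hi := (mem_Icc.mp hi).2
  obtain ⟨h0, h0'⟩ := abs_le.mp (h (3 * i - 3) (by omega))
  obtain ⟨h1, h1'⟩ := abs_le.mp (h (3 * i - 2) (by omega))
  obtain ⟨h2, h2'⟩ := abs_le.mp (h (3 * i - 1) (by omega))
  obtain ⟨h3, h3'⟩ := abs_le.mp (h (3 * i) (by omega))
  exact abs_le.mpr ⟨by linarith, by linarith⟩

theorem abs_simpson38Sum_div_sub_le {u : ℕ → ℝ} {m : ℕ} (hm : m ≠ 0) {v p q : ℝ}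
    (h : ∀ j ≤ 3 * m, |u j - v| ≤ p + q * j) :
    |simpson38Sum u m / (8 * m) - v| ≤ p + 3 * m / 2 * q := by
  have hm8 : (0 : ℝ) < 8 * m := by positivity
  have hsub : simpson38Sum u m / (8 * m) - v = simpson38Sum (fun j => u j - v) m / (8 * m) := by
    rw [simpson38Sum_sub_const]
    field_simp
  rw [hsub, abs_div, abs_of_pos hm8, div_le_iff₀ hm8]
  calc |simpson38Sum (fun j => u j - v) m| ≤ simpson38Sum (fun j => p + q * j) m :=
        abs_simpson38Sum_le h
    _ = (p + 3 * m / 2 * q) * (8 * m) := by rw [simpson38Sum_affine]; ring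

theorem simpson38_div_eq (u : ℕ → ℝ) {a b : ℝ} (hab : a ≠ b) {m : ℕ} (hm : m ≠ 0) :
    3 * (b - a) / (8 * ((3 * m : ℕ) : ℝ)) * simpson38Sum u m / (b - a) =
      simpson38Sum u m / (8 * m) := by
  have : b - a ≠ 0 := sub_ne_zero.mpr hab.symm
  push_cast
  field_simp

theorem grid_mem_Icc {a b : ℝ} (hab : a ≤ b) {j n : ℕ} (hj : j ≤ n) :
    a + j * (b - a) / n ∈ Set.Icc a b := by
  have hjn : (j : ℝ) / n ≤ 1 := div_le_one_of_le₀ (by exact_mod_cast hj) n.cast_nonneg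
  rw [mul_div_right_comm]
  constructor <;> nlinarith [(div_nonneg j.cast_nonneg n.cast_nonneg : (0 : ℝ) ≤ j / n)]

theorem abs_grid_sub_le_of_holder {f Φ : ℝ → ℝ} {a b : ℝ} (hab : a ≤ b)
    (hhold : ∀ x ∈ Set.Icc a b, ∀ y ∈ Set.Icc a b, |f x - f y| ≤ Φ |x - y|)
    {n j k : ℕ} (hjk : j ≤ k) (hkn : k ≤ n) :
    |f (a + k * (b - a) / n) - f (a + j * (b - a) / n)| ≤ (k - j) * Φ ((b - a) / n) := by
  rw [abs_sub_comm, ← Real.dist_eq]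
  refine (dist_le_Ico_sum_of_dist_le (f := fun i : ℕ => f (a + i * (b - a) / n))
    (d := fun _ => Φ ((b - a) / n)) hjk fun {i} _ hik => ?_).trans_eq ?_
  · have hstep : a + (i + 1 : ℕ) * (b - a) / n - (a + i * (b - a) / n) = (b - a) / n := by
      push_cast; ring
    have h := hhold _ (grid_mem_Icc hab (j := i + 1) (n := n) (by omega)) _
      (grid_mem_Icc hab (j := i) (n := n) (by omega))
    rwa [hstep, abs_of_nonneg (div_nonneg (sub_nonneg.2 hab) n.cast_nonneg), abs_sub_comm] at h
  · rw [sum_const, Nat.card_Ico, nsmul_eq_mul, Nat.cast_sub hjk]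

theorem max_sub_le_and_le_min_add_of_abs_sub_le_s8 {s x y r : ℝ} (hx : |s - x| ≤ r)
    (hy : |s - y| ≤ r) : max x y - r ≤ s ∧ s ≤ min x y + r := by
  rw [abs_sub_le_iff] at hx hy
  exact ⟨sub_le_iff_le_add.mpr (max_le (by linarith) (by linarith)),
    (le_min (by linarith) (by linarith) : s - r ≤ min x y) |> sub_le_iff_le_add.mp⟩

theorem simpson38_phi_holder_general
    (a b : ℝ) (hab : a < b) (f Φ : ℝ → ℝ)
    (hhold : ∀ x ∈ Set.Icc a b, ∀ y ∈ Set.Icc a b, |f x - f y| ≤ Φ |x - y|)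
    (n : ℕ) (hn : 1 ≤ n) (hn3 : 3 ∣ n) :
    max (f a) (f b) - (n / 2 : ℝ) * Φ ((b - a) / n) ≤ (3 * (b - a) / (8 * n) * ∑ i ∈ Finset.Icc 1 (n / 3), (f (a + (3 * i - 3 : ℕ) * (b - a) / n) + 3 * f (a + (3 * i - 2 : ℕ) * (b - a) / n) + 3 * f (a + (3 * i - 1 : ℕ) * (b - a) / n) + f (a + (3 * i : ℕ) * (b - a) / n))) / (b - a) ∧
    (3 * (b - a) / (8 * n) * ∑ i ∈ Finset.Icc 1 (n / 3), (f (a + (3 * i - 3 : ℕ) * (b - a) / n) + 3 * f (a + (3 * i - 2 : ℕ) * (b - a) / n) + 3 * f (a + (3 * i - 1 : ℕ) * (b - a) / n) + f (a + (3 * i : ℕ) * (b - a) / n))) / (b - a) ≤ min (f a) (f b) + (n / 2 : ℝ) * Φ ((b - a) / n) := by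
  obtain ⟨m, rfl⟩ := hn3
  have hm : m ≠ 0 := by omega
  rw [Nat.mul_div_cancel_left m three_pos]
  set u : ℕ → ℝ := fun j => f (a + j * (b - a) / ↑(3 * m))
  have hgrid {j k : ℕ} := abs_grid_sub_le_of_holder (n := 3 * m) (j := j) (k := k) hab.le hhold
  set c := Φ ((b - a) / ↑(3 * m))
  have hua : ∀ j ≤ 3 * m, |u j - f a| ≤ 0 + c * j := fun j hj => by
    have := hgrid (Nat.zero_le j) hj
    simp only [Nat.cast_zero, zero_mul, zero_div, add_zero, sub_zero] at this
    linarith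
  have hub : ∀ j ≤ 3 * m, |u j - f b| ≤ 3 * m * c + -c * j := fun j hj => by
    have hxn : a + ((3 * m : ℕ) : ℝ) * (b - a) / ↑(3 * m) = b := by field_simp; ring
    have := hgrid hj le_rfl
    rw [hxn] at this
    rw [abs_sub_comm]
    refine this.trans_eq ?_
    push_cast
    ring
  have ha : |simpson38Sum u m / (8 * m) - f a| ≤ ((3 * m : ℕ) : ℝ) / 2 * c :=
    (abs_simpson38Sum_div_sub_le hm hua).trans_eq (by push_cast; ring)
  have hb : |simpson38Sum u m / (8 * m) - f b| ≤ ((3 * m : ℕ) : ℝ) / 2 * c :=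
    (abs_simpson38Sum_div_sub_le hm hub).trans_eq (by push_cast; ring)
  rw [← simpson38_div_eq u hab.ne hm] at ha hb
  exact max_sub_le_and_le_min_add_of_abs_sub_le_s8 ha hb

theorem simpson38_phi_holder
    (a b : ℝ) (hab : a < b) (f Φ : ℝ → ℝ)
    (hΦ : ∀ t ∈ Set.Icc (0 : ℝ) (b - a), 0 ≤ Φ t)
    (hf : ContinuousOn f (Set.Icc a b))
    (hhold : ∀ x ∈ Set.Icc a b, ∀ y ∈ Set.Icc a b, |f x - f y| ≤ Φ |x - y|)
    (n : ℕ) (hn : 1 ≤ n) (hn3 : 3 ∣ n) :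
    max (f a) (f b) - (n / 2 : ℝ) * Φ ((b - a) / n) ≤ (3 * (b - a) / (8 * n) * ∑ i ∈ Finset.Icc 1 (n / 3), (f (a + (3 * i - 3 : ℕ) * (b - a) / n) + 3 * f (a + (3 * i - 2 : ℕ) * (b - a) / n) + 3 * f (a + (3 * i - 1 : ℕ) * (b - a) / n) + f (a + (3 * i : ℕ) * (b - a) / n))) / (b - a) ∧
    (3 * (b - a) / (8 * n) * ∑ i ∈ Finset.Icc 1 (n / 3), (f (a + (3 * i - 3 : ℕ) * (b - a) / n) + 3 * f (a + (3 * i - 2 : ℕ) * (b - a) / n) + 3 * f (a + (3 * i - 1 : ℕ) * (b - a) / n) + f (a + (3 * i : ℕ) * (b - a) / n))) / (b - a) ≤ min (f a) (f b) + (n / 2 : ℝ) * Φ ((b - a) / n) :=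
  simpson38_phi_holder_general a b hab f Φ hhold n hn hn3
end

section
/- Let f:[a,b]→ℝ be continuous and Φ-convex, i.e., f(tx+(1−t)y) ≤ t f(x) + (1−t) f(y) + t Φ((1−t)|y−x|) + (1−t) Φ(t|y−x|) for all x,y ∈ [a,b] and t ∈ [0,1]. Then for every n ∈ ℕ, n ≥ 1, T_n(f)/(b−a) ≤ (f(a)+f(b))/2 + ((n²−1)/6)·Φ((b−a)/n), where T_n(f) is the composite trapezoidal sum with n equal subintervals. -/
/-! With `t = 1/2`, Φ-convexity at the grid points `xᵢ, xᵢ₊₂` gives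
`2 f(xᵢ₊₁) ≤ f(xᵢ) + f(xᵢ₊₂) + 2 Φ(h)` for `h = (b - a)/n`, so `vᵢ = f(xᵢ) + Φ(h) i²` is a convex
sequence. A convex sequence lies below its chord, hence `vᵢ + vₙ₋ᵢ ≤ v₀ + vₙ` and
`2 ∑ᵢ vᵢ ≤ (n + 1)(v₀ + vₙ)`; subtracting `Φ(h) ∑ i² = Φ(h) n(n+1)(2n+1)/6` leaves the
correction term `(n² - 1)/6 · Φ(h)`. -/

open Finset

def PhiConvexOn (Φ f : ℝ → ℝ) (s : Set ℝ) : Prop :=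
  ∀ x ∈ s, ∀ y ∈ s, ∀ t ∈ Set.Icc (0 : ℝ) 1, f (t * x + (1 - t) * y) ≤
    t * f x + (1 - t) * f y + t * Φ ((1 - t) * |y - x|) + (1 - t) * Φ (t * |y - x|)

def DiscreteConvexOn {𝕜 : Type*} [Ring 𝕜] [LE 𝕜] (n : ℕ) (v : ℕ → 𝕜) : Prop :=
  ∀ i, i + 2 ≤ n → v (i + 1) - v i ≤ v (i + 2) - v (i + 1)

namespace DiscreteConvexOn

variable {𝕜 : Type*} {n : ℕ} {v : ℕ → 𝕜}

theorem monotoneOn_sub [Ring 𝕜] [Preorder 𝕜] (hv : DiscreteConvexOn n v) :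
    MonotoneOn (fun j ↦ v (j + 1) - v j) (Set.Iio n) :=
  monotoneOn_of_le_succ Set.ordConnected_Iio fun j _ _ hj ↦ by
    simp only [Order.succ_eq_add_one, Set.mem_Iio] at hj ⊢
    exact hv j (by omega)

variable [Field 𝕜] [LinearOrder 𝕜] [IsStrictOrderedRing 𝕜]

theorem mul_le_chord (hv : DiscreteConvexOn n v) {i : ℕ} (hi : i ≤ n) :
    (n : 𝕜) * v i ≤ (n - i) * v 0 + i * v n := by
  obtain rfl | hi := hi.eq_or_lt
  · simp
  have hleft : v i - v 0 ≤ i * (v (i + 1) - v i) := by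
    have := sum_le_card_nsmul (range i) (fun j ↦ v (j + 1) - v j) (v (i + 1) - v i) fun j hj ↦
      hv.monotoneOn_sub (Set.mem_Iio.2 ((mem_range.1 hj).trans hi)) (Set.mem_Iio.2 hi)
        (mem_range.1 hj).le
    rwa [sum_range_sub, card_range, nsmul_eq_mul] at this
  have hright : (n - i : ℕ) * (v (i + 1) - v i) ≤ v n - v i := by
    have := card_nsmul_le_sum (Ico i n) (fun k ↦ v (k + 1) - v k) (v (i + 1) - v i) fun k hk ↦
      hv.monotoneOn_sub (Set.mem_Iio.2 hi) (Set.mem_Iio.2 (mem_Ico.1 hk).2) (mem_Ico.1 hk).1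
    rwa [sum_Ico_sub v hi.le, Nat.card_Ico, nsmul_eq_mul] at this
  rw [Nat.cast_sub hi.le] at hright
  have hni : (0 : 𝕜) ≤ n - i := sub_nonneg.2 (by exact_mod_cast hi.le)
  have hi0 : (0 : 𝕜) ≤ i := Nat.cast_nonneg i
  linarith [mul_le_mul_of_nonneg_left hleft hni, mul_le_mul_of_nonneg_left hright hi0]

theorem add_reflect_le (hv : DiscreteConvexOn n v) {i : ℕ} (hi : i ≤ n) :
    v i + v (n - i) ≤ v 0 + v n := by
  rcases Nat.eq_zero_or_pos n with rfl | hn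
  · simp [Nat.le_zero.1 hi]
  have h₁ := hv.mul_le_chord hi
  have h₂ := hv.mul_le_chord (Nat.sub_le n i)
  rw [Nat.cast_sub hi] at h₂
  have h : (n : 𝕜) * (v i + v (n - i)) ≤ n * (v 0 + v n) := by linarith
  exact le_of_mul_le_mul_left h (by exact_mod_cast hn)

theorem two_mul_sum_range_le (hv : DiscreteConvexOn n v) :
    2 * ∑ i ∈ range (n + 1), v i ≤ (n + 1) * (v 0 + v n) := by
  calc 2 * ∑ i ∈ range (n + 1), v i
      = ∑ i ∈ range (n + 1), (v i + v (n - i)) := by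
        rw [sum_add_distrib, ← sum_range_reflect v (n + 1)]; simp [two_mul]
    _ ≤ ∑ i ∈ range (n + 1), (v 0 + v n) :=
        sum_le_sum fun i hi ↦ hv.add_reflect_le (Nat.lt_succ_iff.1 (mem_range.1 hi))
    _ = (n + 1) * (v 0 + v n) := by simp [mul_add]

end DiscreteConvexOn

theorem sum_range_succ_natCast_sq {𝕜 : Type*} [Field 𝕜] (n : ℕ) :
    6 * ∑ i ∈ range (n + 1), (i : 𝕜) ^ 2 = n * (n + 1) * (2 * n + 1) := by
  induction n with
  | zero => simp
  | succ m ih => rw [sum_range_succ, mul_add, ih]; push_cast; ring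

theorem PhiConvexOn.two_mul_apply_midpoint_le {Φ f : ℝ → ℝ} {s : Set ℝ} (hf : PhiConvexOn Φ f s)
    {x y : ℝ} (hx : x ∈ s) (hy : y ∈ s) :
    2 * f ((x + y) / 2) ≤ f x + f y + 2 * Φ (|y - x| / 2) := by
  have h := hf x hx y hy (1 / 2) ⟨by norm_num, by norm_num⟩
  rw [show 1 / 2 * x + (1 - 1 / 2) * y = (x + y) / 2 by ring,
    show (1 - 1 / 2) * |y - x| = |y - x| / 2 by ring, show 1 / 2 * |y - x| = |y - x| / 2 by ring] at h
  linarith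

theorem PhiConvexOn.discreteConvexOn_grid_add_sq {Φ f : ℝ → ℝ} {s : Set ℝ}
    (hf : PhiConvexOn Φ f s) {a h : ℝ} (hh : 0 ≤ h) {n : ℕ} (hs : ∀ i ≤ n, a + i * h ∈ s) :
    DiscreteConvexOn n fun i ↦ f (a + i * h) + Φ h * i ^ 2 := by
  intro i hi
  have hmid := hf.two_mul_apply_midpoint_le (hs i (by omega)) (hs (i + 2) (by omega))
  have hx : (a + i * h + (a + (i + 2 : ℕ) * h)) / 2 = a + (i + 1 : ℕ) * h := by push_cast; ring
  have hd : |a + (i + 2 : ℕ) * h - (a + i * h)| / 2 = h := by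
    push_cast
    rw [show a + (i + 2) * h - (a + i * h) = 2 * h by ring, abs_of_nonneg (by positivity)]
    ring
  rw [hx, hd] at hmid
  push_cast at hmid ⊢
  linarith

theorem trapezoid_phi_convex_upper_general
    (a b : ℝ) (hab : a < b) (f Φ : ℝ → ℝ)
    (hconv : ∀ x ∈ Set.Icc a b, ∀ y ∈ Set.Icc a b, ∀ t ∈ Set.Icc (0:ℝ) 1, f (t * x + (1 - t) * y) ≤ t * f x + (1 - t) * f y + t * Φ ((1 - t) * |y - x|) + (1 - t) * Φ (t * |y - x|))
    (n : ℕ) (hn : 1 ≤ n) :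
    ((b - a) / (2 * n) * (f a + 2 * ∑ i ∈ Finset.Ico 1 n, f (a + i * (b - a) / n) + f b)) / (b - a) ≤ (f a + f b) / 2 + (((n : ℝ) ^ 2 - 1) / 6) * Φ ((b - a) / n) := by
  have hn₀ : (0 : ℝ) < n := by exact_mod_cast hn
  set h := (b - a) / n
  have hh : 0 ≤ h := div_nonneg (by linarith) hn₀.le
  have hgrid : ∀ i ≤ n, a + i * h ∈ Set.Icc a b := fun i hi ↦ by
    have : (i : ℝ) * h ≤ b - a := by
      calc (i : ℝ) * h ≤ n * h := by gcongr
        _ = b - a := mul_div_cancel₀ _ hn₀.ne'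
    constructor <;> nlinarith
  have hsum := (PhiConvexOn.discreteConvexOn_grid_add_sq hconv hh hgrid).two_mul_sum_range_le
  have hsq := sum_range_succ_natCast_sq (𝕜 := ℝ) n
  have hb : a + n * h = b := by rw [mul_div_cancel₀ _ hn₀.ne']; ring
  have hsplit : ∑ i ∈ range (n + 1), f (a + i * h) = f a + ∑ i ∈ Ico 1 n, f (a + i * h) + f b := by
    rw [sum_range_succ, sum_range_eq_add_Ico _ hn, hb]; simp
  rw [sum_add_distrib, ← mul_sum, hsplit] at hsum
  have hT : (b - a) / (2 * n) * (f a + 2 * ∑ i ∈ Ico 1 n, f (a + i * (b - a) / n) + f b) / (b - a)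
      = (f a + 2 * ∑ i ∈ Ico 1 n, f (a + i * h) + f b) / (2 * n) := by
    have hba : b - a ≠ 0 := by linarith
    simp only [h, mul_div_assoc]
    field_simp
  rw [hT, div_le_iff₀ (by positivity)]
  rw [Nat.cast_zero, zero_mul, add_zero, hb] at hsum
  linear_combination hsum - Φ h / 3 * hsq

theorem trapezoid_phi_convex_upper
    (a b : ℝ) (hab : a < b) (f Φ : ℝ → ℝ)
    (hΦ : ∀ t ∈ Set.Icc (0 : ℝ) (b - a), 0 ≤ Φ t)
    (hf : ContinuousOn f (Set.Icc a b))
    (hconv : ∀ x ∈ Set.Icc a b, ∀ y ∈ Set.Icc a b, ∀ t ∈ Set.Icc (0:ℝ) 1, f (t * x + (1 - t) * y) ≤ t * f x + (1 - t) * f y + t * Φ ((1 - t) * |y - x|) + (1 - t) * Φ (t * |y - x|))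
    (n : ℕ) (hn : 1 ≤ n) :
    ((b - a) / (2 * n) * (f a + 2 * ∑ i ∈ Finset.Ico 1 n, f (a + i * (b - a) / n) + f b)) / (b - a) ≤ (f a + f b) / 2 + (((n : ℝ) ^ 2 - 1) / 6) * Φ ((b - a) / n) :=
  trapezoid_phi_convex_upper_general a b hab f Φ hconv n hn
end

section
/- Let f:[a,b]→ℝ be a continuous convex function. Then for every n ∈ ℕ, n ≥ 1, f((a+b)/2) ≤ T_n(f)/(b−a) ≤ (f(a)+f(b))/2, where T_n(f) is the composite trapezoidal sum with n equal subintervals. -/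
/-!
Reflecting the index `i ↦ n - i` rewrites the composite trapezoidal sum as the average of
`(f x_i + f x_{n-i}) / 2` over `i < n`. The nodes `x_i` and `x_{n-i}` are symmetric about the
midpoint `(a + b) / 2`, so by convexity each such pair lies between `2 f ((a + b) / 2)` and
`f a + f b`, and averaging preserves both bounds.
-/

open Finset

theorem add_two_mul_sum_Ico_add_eq_sum_range_add_reflect {R : Type*} [Semiring R]
    (u : ℕ → R) {n : ℕ} (hn : 1 ≤ n) :
    u 0 + 2 * ∑ i ∈ Ico 1 n, u i + u n = ∑ i ∈ range n, (u i + u (n - i)) := by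
  obtain ⟨m, rfl⟩ : ∃ m, n = m + 1 := ⟨n - 1, by omega⟩
  have hreflect : ∑ i ∈ range (m + 1), u (m + 1 - i) = ∑ i ∈ range (m + 1), u (i + 1) := by
    rw [← sum_range_reflect (fun i => u (i + 1))]
    exact sum_congr rfl fun i hi => by rw [mem_range] at hi; congr 1; omega
  rw [sum_add_distrib, hreflect, sum_Ico_eq_sum_range, sum_range_succ', sum_range_succ]
  simp only [add_tsub_cancel_right, add_comm 1]
  rw [two_mul]
  abel

section ConvexPair

variable {E : Type*} [AddCommGroup E] [Module ℝ E] {s : Set E} {f : E → ℝ} {x y : E} {p q : ℝ}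

theorem ConvexOn.map_add_map_swap_le (hf : ConvexOn ℝ s f) (hx : x ∈ s) (hy : y ∈ s)
    (hp : 0 ≤ p) (hq : 0 ≤ q) (hpq : p + q = 1) :
    f (p • x + q • y) + f (q • x + p • y) ≤ f x + f y := by
  have h₁ := hf.2 hx hy hp hq hpq
  have h₂ := hf.2 hx hy hq hp (by rw [add_comm, hpq])
  simp only [smul_eq_mul] at h₁ h₂
  linear_combination h₁ + h₂ + (f x + f y) * hpq

theorem ConvexOn.two_mul_map_midpoint_le_map_add_map_swap (hf : ConvexOn ℝ s f)
    (hx : x ∈ s) (hy : y ∈ s) (hp : 0 ≤ p) (hq : 0 ≤ q) (hpq : p + q = 1) :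
    2 * f (midpoint ℝ x y) ≤ f (p • x + q • y) + f (q • x + p • y) := by
  have h := hf.2 (hf.1 hx hy hp hq hpq) (hf.1 hx hy hq hp (by rw [add_comm, hpq]))
    (by norm_num : (0 : ℝ) ≤ 1 / 2) (by norm_num : (0 : ℝ) ≤ 1 / 2) (by norm_num)
  have hmid : (1 / 2 : ℝ) • (p • x + q • y) + (1 / 2 : ℝ) • (q • x + p • y) = midpoint ℝ x y := by
    obtain rfl : q = 1 - p := by linarith
    rw [midpoint_eq_smul_add, invOf_eq_inv]
    module
  rw [hmid, smul_eq_mul, smul_eq_mul] at h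
  linarith

end ConvexPair

noncomputable def uniformNode (a b : ℝ) (n i : ℕ) : ℝ := a + i * (b - a) / n

section UniformNode

variable {a b : ℝ} {n i : ℕ}

theorem uniformNode_zero (a b : ℝ) (n : ℕ) : uniformNode a b n 0 = a := by
  simp [uniformNode]

theorem uniformNode_self (hn : n ≠ 0) : uniformNode a b n n = b := by
  simp [uniformNode, hn]

theorem uniformNode_eq (hn : n ≠ 0) : uniformNode a b n i = (1 - i / n : ℝ) • a + (i / n : ℝ) • b := by
  simp only [uniformNode, smul_eq_mul]
  field_simp
  ring

theorem uniformNode_sub (hn : n ≠ 0) (hi : i ≤ n) :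
    uniformNode a b n (n - i) = (i / n : ℝ) • a + (1 - i / n : ℝ) • b := by
  simp only [uniformNode, smul_eq_mul, Nat.cast_sub hi]
  field_simp
  ring

variable {f : ℝ → ℝ}

theorem ConvexOn.map_uniformNode_add_map_uniformNode_sub_le (hf : ConvexOn ℝ (Set.Icc a b) f)
    (hab : a ≤ b) (hn : n ≠ 0) (hi : i ≤ n) :
    f (uniformNode a b n i) + f (uniformNode a b n (n - i)) ≤ f a + f b := by
  rw [uniformNode_eq hn, uniformNode_sub hn hi]
  refine hf.map_add_map_swap_le (Set.left_mem_Icc.2 hab) (Set.right_mem_Icc.2 hab) ?_ ?_ (by ring)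
  · rw [sub_nonneg, div_le_one (by positivity)]
    exact_mod_cast hi
  · positivity

theorem ConvexOn.two_mul_map_midpoint_le_map_uniformNode_add (hf : ConvexOn ℝ (Set.Icc a b) f)
    (hab : a ≤ b) (hn : n ≠ 0) (hi : i ≤ n) :
    2 * f ((a + b) / 2) ≤ f (uniformNode a b n i) + f (uniformNode a b n (n - i)) := by
  have hmid : midpoint ℝ a b = (a + b) / 2 := by
    rw [midpoint_eq_smul_add, smul_eq_mul, invOf_eq_inv]
    ring
  rw [uniformNode_eq hn, uniformNode_sub hn hi, ← hmid]
  refine hf.two_mul_map_midpoint_le_map_add_map_swap (Set.left_mem_Icc.2 hab)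
    (Set.right_mem_Icc.2 hab) ?_ ?_ (by ring)
  · rw [sub_nonneg, div_le_one (by positivity)]
    exact_mod_cast hi
  · positivity

end UniformNode

theorem trapezoid_convex_hermite_hadamard_general
    (a b : ℝ) (hab : a < b) (f : ℝ → ℝ)
    (hconv : ConvexOn ℝ (Set.Icc a b) f)
    (n : ℕ) (hn : 1 ≤ n) :
    f ((a + b) / 2) ≤ ((b - a) / (2 * n) * (f a + 2 * ∑ i ∈ Finset.Ico 1 n, f (a + i * (b - a) / n) + f b)) / (b - a) ∧ ((b - a) / (2 * n) * (f a + 2 * ∑ i ∈ Finset.Ico 1 n, f (a + i * (b - a) / n) + f b)) / (b - a) ≤ (f a + f b) / 2 := by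
  have hn₀ : n ≠ 0 := by omega
  set g : ℕ → ℝ := fun i => f (uniformNode a b n i) + f (uniformNode a b n (n - i))
  have htrap : (b - a) / (2 * n) *
      (f a + 2 * ∑ i ∈ Ico 1 n, f (a + i * (b - a) / n) + f b) / (b - a) =
      (∑ i ∈ range n, g i) / (2 * n) := by
    have hsum := add_two_mul_sum_Ico_add_eq_sum_range_add_reflect (f ∘ uniformNode a b n) hn
    simp only [Function.comp_apply, uniformNode_zero, uniformNode_self hn₀] at hsum
    rw [show ∑ i ∈ Ico 1 n, f (a + i * (b - a) / n) = ∑ i ∈ Ico 1 n, f (uniformNode a b n i)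
      from rfl, hsum]
    field_simp [(sub_pos.2 hab).ne']
    rfl
  have hlower : ∀ i ∈ range n, 2 * f ((a + b) / 2) ≤ g i := fun i hi =>
    hconv.two_mul_map_midpoint_le_map_uniformNode_add hab.le hn₀ (mem_range.1 hi).le
  have hupper : ∀ i ∈ range n, g i ≤ f a + f b := fun i hi =>
    hconv.map_uniformNode_add_map_uniformNode_sub_le hab.le hn₀ (mem_range.1 hi).le
  have hn' : (0 : ℝ) < 2 * n := by positivity
  rw [htrap, le_div_iff₀ hn', div_le_iff₀ hn']
  have hsum_lower := card_nsmul_le_sum _ _ _ hlower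
  have hsum_upper := sum_le_card_nsmul _ _ _ hupper
  simp only [card_range, nsmul_eq_mul] at hsum_lower hsum_upper
  constructor <;> linarith

theorem trapezoid_convex_hermite_hadamard
    (a b : ℝ) (hab : a < b) (f : ℝ → ℝ)
    (hf : ContinuousOn f (Set.Icc a b))
    (hconv : ConvexOn ℝ (Set.Icc a b) f)
    (n : ℕ) (hn : 1 ≤ n) :
    f ((a + b) / 2) ≤ ((b - a) / (2 * n) * (f a + 2 * ∑ i ∈ Finset.Ico 1 n, f (a + i * (b - a) / n) + f b)) / (b - a) ∧ ((b - a) / (2 * n) * (f a + 2 * ∑ i ∈ Finset.Ico 1 n, f (a + i * (b - a) / n) + f b)) / (b - a) ≤ (f a + f b) / 2 :=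
  trapezoid_convex_hermite_hadamard_general a b hab f hconv n hn
end

section
/- Let f:[a,b]→ℝ be continuous and Φ-affine, i.e., |f(tx+(1−t)y) − t f(x) − (1−t) f(y)| ≤ t Φ((1−t)|y−x|) + (1−t) Φ(t|y−x|) for all x,y ∈ [a,b] and t ∈ [0,1]. Then for every even n ≥ 2, max{f((a+b)/2) − E_n, (f(a)+f(b))/2 − ((n²−1)/6)Φ((b−a)/n)} ≤ T_n(f)/(b−a) ≤ min{f((a+b)/2) + E_n, (f(a)+f(b))/2 + ((n²−1)/6)Φ((b−a)/n)}, where E_n = ((n²+2)/12)·Φ((b−a)/n). -/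
/-!
Write `g i = f (xᵢ)` and `Δ²gⱼ = gⱼ₊₁ - 2gⱼ + gⱼ₋₁`. Taking `t = 1/2` in the Φ-affinity
inequality gives `|Δ²gⱼ| ≤ 2Φ((b-a)/n)` at every interior node. Summing by parts twice expresses
both errors as weighted sums of second differences, with the discrete Peano kernels of the
two rules:
`T_n(f)/(b-a) - (f(a)+f(b))/2 = -(1/2n) ∑ j(n-j) Δ²gⱼ` and, for `n = 2m`,
`T_n(f)/(b-a) - f((a+b)/2) = ∑ (ρⱼ/2 - j(n-j)/2n) Δ²gⱼ` with `ρⱼ = min(j, n-j)`.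
Both kernels are nonnegative, so the errors are bounded by `2Φ((b-a)/n)` times the kernel sums,
`(n²-1)/12` and `(n²+2)/24`.
-/

open Finset

section SecondDifference

variable {R : Type*} [CommRing R]

/-- Meaningful for `j ≥ 1` only: at `j = 0` the truncated `j - 1` makes this `g 1 - g 0`. -/
def secondDiff (g : ℕ → R) (j : ℕ) : R := g (j + 1) - 2 * g j + g (j - 1)

theorem sum_Ico_mul_secondDiff (φ g : ℕ → R) {k n : ℕ} (hkn : k ≤ n) :
    ∑ j ∈ Ico k n, φ j * secondDiff g j =
      ∑ j ∈ Ico k n, secondDiff φ j * g j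
        + ((φ (n - 1) * g n - φ n * g (n - 1)) - (φ (k - 1) * g k - φ k * g (k - 1))) := by
  rw [← sub_eq_iff_eq_add', ← sum_sub_distrib,
    ← sum_Ico_sub (fun j ↦ φ (j - 1) * g j - φ j * g (j - 1)) hkn]
  refine sum_congr rfl fun j _ ↦ ?_
  simp only [secondDiff, Nat.add_sub_cancel]
  ring

end SecondDifference

/-- `T_n(f) / (b - a)` when `g i = f (xᵢ)`. -/
noncomputable def trapezoidMean (g : ℕ → ℝ) (n : ℕ) : ℝ :=
  (g 0 + 2 * ∑ i ∈ Ico 1 n, g i + g n) / (2 * n)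

theorem trapezoidMean_eq_sub_sum_mul_secondDiff (g : ℕ → ℝ) {n : ℕ} (hn : 1 ≤ n) :
    trapezoidMean g n =
      (g 0 + g n) / 2 - (∑ j ∈ Ico 1 n, (j * (n - j) : ℝ) * secondDiff g j) / (2 * n) := by
  have hφ : ∀ j ∈ Ico 1 n, secondDiff (fun j : ℕ ↦ (j * (n - j) : ℝ)) j * g j = -2 * g j := by
    intro j hj
    simp only [secondDiff, Nat.cast_sub (mem_Ico.1 hj).1]
    push_cast
    ring
  rw [sum_Ico_mul_secondDiff _ _ hn, sum_congr rfl hφ, ← mul_sum, trapezoidMean]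
  have : (n : ℝ) ≠ 0 := by positivity
  field_simp
  simp only [Nat.cast_sub hn]
  push_cast
  ring

section Tent

variable {m : ℕ}

theorem min_two_mul_sub_of_le {j : ℕ} (hj : j ≤ m) : min (j : ℝ) (2 * m - j) = j := by
  have : (j : ℝ) ≤ m := by exact_mod_cast hj
  exact min_eq_left (by linarith)

theorem min_two_mul_sub_of_ge {j : ℕ} (hj : m ≤ j) : min (j : ℝ) (2 * m - j) = 2 * m - j := by
  have : (m : ℝ) ≤ j := by exact_mod_cast hj
  exact min_eq_right (by linarith)

theorem secondDiff_min_two_mul_sub {j : ℕ} (hj : j ∈ Ico 1 (2 * m)) :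
    secondDiff (fun i : ℕ ↦ min (i : ℝ) (2 * m - i)) j = if j = m then -2 else 0 := by
  obtain ⟨hj1, hj2⟩ := mem_Ico.1 hj
  simp only [secondDiff]
  rcases lt_trichotomy j m with hlt | rfl | hgt
  · rw [if_neg hlt.ne, min_two_mul_sub_of_le hlt, min_two_mul_sub_of_le hlt.le,
      min_two_mul_sub_of_le (by omega), Nat.cast_sub hj1]
    push_cast; ring
  · rw [if_pos rfl, min_two_mul_sub_of_ge (by omega), min_two_mul_sub_of_le le_rfl,
      min_two_mul_sub_of_le (by omega), Nat.cast_sub hj1]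
    push_cast; ring
  · rw [if_neg hgt.ne', min_two_mul_sub_of_ge (by omega), min_two_mul_sub_of_ge hgt.le,
      min_two_mul_sub_of_ge (by omega), Nat.cast_sub hj1]
    push_cast; ring

theorem eq_sub_sum_min_mul_secondDiff (g : ℕ → ℝ) (hm : 1 ≤ m) :
    g m = (g 0 + g (2 * m)) / 2
      - (∑ j ∈ Ico 1 (2 * m), min (j : ℝ) (2 * m - j) * secondDiff g j) / 2 := by
  have hρ : ∀ j ∈ Ico 1 (2 * m),
      secondDiff (fun i : ℕ ↦ min (i : ℝ) (2 * m - i)) j * g j = if j = m then -2 * g j else 0 :=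
    fun j hj ↦ by rw [secondDiff_min_two_mul_sub hj]; split_ifs <;> ring
  rw [sum_Ico_mul_secondDiff _ _ (by omega), sum_congr rfl hρ, sum_ite_eq',
    if_pos (mem_Ico.2 ⟨hm, by omega⟩), min_two_mul_sub_of_ge (by omega),
    min_two_mul_sub_of_ge (le_of_lt (by omega : m < 2 * m)), Nat.sub_self,
    min_two_mul_sub_of_le (Nat.zero_le m), min_two_mul_sub_of_le hm, Nat.cast_sub (by omega)]
  push_cast
  ring

/-- Apply `eq_sub_sum_min_mul_secondDiff` to `j ↦ j²`, whose second difference is `2`. -/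
theorem sum_Ico_min_two_mul_sub (hm : 1 ≤ m) :
    ∑ j ∈ Ico 1 (2 * m), min (j : ℝ) (2 * m - j) = (m : ℝ) ^ 2 := by
  have key := eq_sub_sum_min_mul_secondDiff (fun j ↦ (j : ℝ) ^ 2) hm
  have hsq : ∀ j ∈ Ico 1 (2 * m), min (j : ℝ) (2 * m - j) * secondDiff (fun j ↦ (j : ℝ) ^ 2) j
      = 2 * min (j : ℝ) (2 * m - j) := by
    intro j hj
    simp only [secondDiff, Nat.cast_sub (mem_Ico.1 hj).1]
    push_cast
    ring
  rw [sum_congr rfl hsq, ← mul_sum] at key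
  push_cast at key
  linarith

end Tent

theorem sum_range_mul_sub (n : ℕ) : ∑ j ∈ range n, (j * (n - j) : ℝ) = n * (n ^ 2 - 1) / 6 := by
  induction n with
  | zero => simp
  | succ n ih =>
    have gauss : ∀ k : ℕ, ∑ j ∈ range k, (j : ℝ) = k * (k - 1) / 2 := by
      intro k
      induction k with
      | zero => simp
      | succ k ih => rw [sum_range_succ, ih]; push_cast; ring
    have split : ∀ j ∈ range n, (j * ((n + 1 : ℕ) - j) : ℝ) = j * (n - j) + j := by
      intro j _; push_cast; ring
    rw [sum_range_succ, sum_congr rfl split, sum_add_distrib, ih, gauss]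
    push_cast
    ring

theorem sum_Ico_mul_sub (n : ℕ) : ∑ j ∈ Ico 1 n, (j * (n - j) : ℝ) = n * (n ^ 2 - 1) / 6 := by
  rcases n with _ | n
  · simp
  · rw [← sum_range_mul_sub, range_eq_Ico, sum_eq_sum_Ico_succ_bot (Nat.succ_pos n)]
    simp

theorem abs_sum_mul_le {ι : Type*} (s : Finset ι) {u w : ι → ℝ} {C : ℝ}
    (hu : ∀ i ∈ s, 0 ≤ u i) (hw : ∀ i ∈ s, |w i| ≤ C) :
    |∑ i ∈ s, u i * w i| ≤ C * ∑ i ∈ s, u i := by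
  calc |∑ i ∈ s, u i * w i| ≤ ∑ i ∈ s, |u i * w i| := abs_sum_le_sum_abs _ _
    _ ≤ ∑ i ∈ s, u i * C := sum_le_sum fun i hi ↦ by
        rw [abs_mul, abs_of_nonneg (hu i hi)]
        exact mul_le_mul_of_nonneg_left (hw i hi) (hu i hi)
    _ = C * ∑ i ∈ s, u i := by rw [← sum_mul, mul_comm]

theorem abs_trapezoidMean_sub_endpoints_le (g : ℕ → ℝ) {n : ℕ} (hn : 1 ≤ n) {c : ℝ}
    (hg : ∀ j ∈ Ico 1 n, |secondDiff g j| ≤ 2 * c) :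
    |trapezoidMean g n - (g 0 + g n) / 2| ≤ ((n : ℝ) ^ 2 - 1) / 6 * c := by
  have hφ : ∀ j ∈ Ico 1 n, (0 : ℝ) ≤ j * (n - j) := fun j hj ↦
    mul_nonneg (Nat.cast_nonneg j) (sub_nonneg.2 (by exact_mod_cast (mem_Ico.1 hj).2.le))
  have hn' : (0 : ℝ) < n := by positivity
  rw [trapezoidMean_eq_sub_sum_mul_secondDiff g hn, sub_sub_cancel_left, abs_neg, abs_div,
    abs_of_pos (by positivity : (0 : ℝ) < 2 * n), div_le_iff₀ (by positivity)]
  calc _ ≤ 2 * c * ∑ j ∈ Ico 1 n, (j * (n - j) : ℝ) := abs_sum_mul_le _ hφ hg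
    _ = _ := by rw [sum_Ico_mul_sub]; ring

theorem abs_trapezoidMean_sub_midpoint_le (g : ℕ → ℝ) {m : ℕ} (hm : 1 ≤ m) {c : ℝ}
    (hg : ∀ j ∈ Ico 1 (2 * m), |secondDiff g j| ≤ 2 * c) :
    |trapezoidMean g (2 * m) - g m| ≤ (((2 * m : ℕ) : ℝ) ^ 2 + 2) / 12 * c := by
  set κ : ℕ → ℝ := fun j ↦ min (j : ℝ) (2 * m - j) / 2 - j * (2 * m - j) / (2 * (2 * m))
  have hm' : (0 : ℝ) < m := by exact_mod_cast hm
  have hdiff : trapezoidMean g (2 * m) - g m = ∑ j ∈ Ico 1 (2 * m), κ j * secondDiff g j := by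
    rw [trapezoidMean_eq_sub_sum_mul_secondDiff g (by omega), eq_sub_sum_min_mul_secondDiff g hm]
    simp only [κ, sub_mul, sum_sub_distrib, sum_div, mul_div_right_comm]
    push_cast
    ring
  have hκ : ∀ j ∈ Ico 1 (2 * m), 0 ≤ κ j := by
    intro j hj
    have hj : (j : ℝ) ≤ 2 * m := by exact_mod_cast (mem_Ico.1 hj).2.le
    have : (j : ℝ) * (2 * m - j) ≤ 2 * m * min (j : ℝ) (2 * m - j) := by
      rcases le_total (j : ℝ) (2 * m - j) with h | h
      · rw [min_eq_left h]; nlinarith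
      · rw [min_eq_right h]; nlinarith
    simp only [κ, sub_nonneg]
    rw [div_le_div_iff₀ (by positivity) two_pos]
    linarith
  have hsum : ∑ j ∈ Ico 1 (2 * m), κ j = ((2 * m : ℝ) ^ 2 + 2) / 24 := by
    have := sum_Ico_mul_sub (2 * m)
    push_cast at this
    simp only [κ, sum_sub_distrib, ← sum_div, sum_Ico_min_two_mul_sub hm, this]
    field_simp
    ring
  rw [hdiff]
  calc _ ≤ 2 * c * ∑ j ∈ Ico 1 (2 * m), κ j := abs_sum_mul_le _ hκ hg
    _ = _ := by rw [hsum]; push_cast; ring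

theorem abs_sub_midpoint_le_of_affine {s : Set ℝ} {f Φ : ℝ → ℝ}
    (haff : ∀ x ∈ s, ∀ y ∈ s, ∀ t ∈ Set.Icc (0 : ℝ) 1,
      |f (t * x + (1 - t) * y) - t * f x - (1 - t) * f y|
        ≤ t * Φ ((1 - t) * |y - x|) + (1 - t) * Φ (t * |y - x|))
    {x y : ℝ} (hx : x ∈ s) (hy : y ∈ s) :
    |f ((x + y) / 2) - (f x + f y) / 2| ≤ Φ (|y - x| / 2) := by
  have h := haff x hx y hy (1 / 2) ⟨by norm_num, by norm_num⟩
  rw [show (1 : ℝ) - 1 / 2 = 1 / 2 by norm_num, show 1 / 2 * x + 1 / 2 * y = (x + y) / 2 by ring,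
    show 1 / 2 * |y - x| = |y - x| / 2 by ring] at h
  calc _ = |f ((x + y) / 2) - 1 / 2 * f x - 1 / 2 * f y| := by ring_nf
    _ ≤ _ := h
    _ = _ := by ring

theorem add_mul_div_mem_Icc {a b : ℝ} (hab : a ≤ b) {n : ℕ} {k : ℝ} (hk₀ : 0 ≤ k)
    (hkn : k ≤ n) : a + k * (b - a) / n ∈ Set.Icc a b := by
  rcases (Nat.cast_nonneg (α := ℝ) n).eq_or_lt with hn | hn
  · simp [← hn, hab]
  have hfrac : k * (b - a) / n ≤ b - a := by
    rw [div_le_iff₀ hn]; nlinarith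
  exact ⟨le_add_of_nonneg_right (by have := sub_nonneg.2 hab; positivity), by linarith⟩

theorem abs_secondDiff_comp_grid_le {a b : ℝ} (hab : a ≤ b) {f Φ : ℝ → ℝ}
    (hmid : ∀ x ∈ Set.Icc a b, ∀ y ∈ Set.Icc a b,
      |f ((x + y) / 2) - (f x + f y) / 2| ≤ Φ (|y - x| / 2))
    {n j : ℕ} (hj : j ∈ Ico 1 n) :
    |secondDiff (fun i : ℕ ↦ f (a + i * (b - a) / n)) j| ≤ 2 * Φ ((b - a) / n) := by
  obtain ⟨hj1, hjn⟩ := mem_Ico.1 hj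
  have hj1' : (1 : ℝ) ≤ j := by exact_mod_cast hj1
  have hjn' : (j : ℝ) + 1 ≤ n := by exact_mod_cast hjn
  have h := hmid _ (add_mul_div_mem_Icc hab (k := j - 1) (by linarith) (by linarith))
    _ (add_mul_div_mem_Icc hab (k := j + 1) (by positivity) hjn')
  have hmid_pt : (a + (j - 1) * (b - a) / n + (a + (j + 1) * (b - a) / n)) / 2
      = a + j * (b - a) / n := by ring
  have hdist : |a + (j + 1) * (b - a) / n - (a + (j - 1) * (b - a) / n)| / 2 = (b - a) / n := by
    rw [show a + (j + 1) * (b - a) / n - (a + (j - 1) * (b - a) / n) = 2 * ((b - a) / n) by ring,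
      abs_of_nonneg (by have := sub_nonneg.2 hab; positivity)]
    ring
  rw [hmid_pt, hdist] at h
  simp only [secondDiff, Nat.cast_add, Nat.cast_one, Nat.cast_sub hj1]
  calc _ = 2 * |f (a + j * (b - a) / n)
        - (f (a + (j - 1) * (b - a) / n) + f (a + (j + 1) * (b - a) / n)) / 2| := by
          rw [← abs_two, ← abs_mul, ← abs_neg]; congr 1; ring
    _ ≤ _ := by linarith

theorem trapezoid_phi_affine_general
    (a b : ℝ) (hab : a < b) (f Φ : ℝ → ℝ)
    (haff : ∀ x ∈ Set.Icc a b, ∀ y ∈ Set.Icc a b, ∀ t ∈ Set.Icc (0:ℝ) 1, |f (t * x + (1 - t) * y) - t * f x - (1 - t) * f y| ≤ t * Φ ((1 - t) * |y - x|) + (1 - t) * Φ (t * |y - x|))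
    (n : ℕ) (hn : 2 ≤ n) (hne : Even n) :
    max (f ((a + b) / 2) - (((n : ℝ) ^ 2 + 2) / 12) * Φ ((b - a) / n))
        ((f a + f b) / 2 - (((n : ℝ) ^ 2 - 1) / 6) * Φ ((b - a) / n)) ≤ ((b - a) / (2 * n) * (f a + 2 * ∑ i ∈ Finset.Ico 1 n, f (a + i * (b - a) / n) + f b)) / (b - a) ∧
    ((b - a) / (2 * n) * (f a + 2 * ∑ i ∈ Finset.Ico 1 n, f (a + i * (b - a) / n) + f b)) / (b - a) ≤
      min (f ((a + b) / 2) + (((n : ℝ) ^ 2 + 2) / 12) * Φ ((b - a) / n))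
        ((f a + f b) / 2 + (((n : ℝ) ^ 2 - 1) / 6) * Φ ((b - a) / n)) := by
  obtain ⟨m, rfl⟩ := hne.two_dvd
  have hm : 1 ≤ m := by omega
  have hm' : (0 : ℝ) < m := by exact_mod_cast hm
  set g : ℕ → ℝ := fun i ↦ f (a + i * (b - a) / (2 * m : ℕ))
  have hg0 : g 0 = f a := by simp [g]
  have hgn : g (2 * m) = f b := by simp only [g]; congr 1; field_simp; ring
  have hgm : g m = f ((a + b) / 2) := by simp only [g]; congr 1; push_cast; field_simp; ring
  have hT : (b - a) / (2 * (2 * m : ℕ)) * (f a + 2 * ∑ i ∈ Ico 1 (2 * m), g i + f b) / (b - a)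
      = trapezoidMean g (2 * m) := by
    rw [trapezoidMean, hg0, hgn]
    field_simp [(sub_pos.2 hab).ne']
  have hsd : ∀ j ∈ Ico 1 (2 * m), |secondDiff g j| ≤ 2 * Φ ((b - a) / (2 * m : ℕ)) :=
    fun j hj ↦ abs_secondDiff_comp_grid_le hab.le
      (fun x hx y hy ↦ abs_sub_midpoint_le_of_affine haff hx hy) hj
  have hE := abs_le.1 (abs_trapezoidMean_sub_endpoints_le g (by omega) hsd)
  have hM := abs_le.1 (abs_trapezoidMean_sub_midpoint_le g hm hsd)
  rw [hg0, hgn] at hE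
  rw [hgm] at hM
  rw [hT]
  exact ⟨max_le (by linarith) (by linarith), le_min (by linarith) (by linarith)⟩

theorem trapezoid_phi_affine
    (a b : ℝ) (hab : a < b) (f Φ : ℝ → ℝ)
    (hΦ : ∀ t ∈ Set.Icc (0 : ℝ) (b - a), 0 ≤ Φ t)
    (hf : ContinuousOn f (Set.Icc a b))
    (haff : ∀ x ∈ Set.Icc a b, ∀ y ∈ Set.Icc a b, ∀ t ∈ Set.Icc (0:ℝ) 1, |f (t * x + (1 - t) * y) - t * f x - (1 - t) * f y| ≤ t * Φ ((1 - t) * |y - x|) + (1 - t) * Φ (t * |y - x|))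
    (n : ℕ) (hn : 2 ≤ n) (hne : Even n) :
    max (f ((a + b) / 2) - (((n : ℝ) ^ 2 + 2) / 12) * Φ ((b - a) / n))
        ((f a + f b) / 2 - (((n : ℝ) ^ 2 - 1) / 6) * Φ ((b - a) / n)) ≤ ((b - a) / (2 * n) * (f a + 2 * ∑ i ∈ Finset.Ico 1 n, f (a + i * (b - a) / n) + f b)) / (b - a) ∧
    ((b - a) / (2 * n) * (f a + 2 * ∑ i ∈ Finset.Ico 1 n, f (a + i * (b - a) / n) + f b)) / (b - a) ≤
      min (f ((a + b) / 2) + (((n : ℝ) ^ 2 + 2) / 12) * Φ ((b - a) / n))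
        ((f a + f b) / 2 + (((n : ℝ) ^ 2 - 1) / 6) * Φ ((b - a) / n)) :=
  trapezoid_phi_affine_general a b hab f Φ haff n hn hne
end
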